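/- Let q ∈ ℂ with 0 < |q| < 1, and for r, s ∈ ℕ set d_{r,s} = h((B*)ˢ (A*)ʳ Aʳ Bˢ). Then: (i) for all r ≥ 1, d_{r,s} = d_{r−1,s} − |q|^{2r}·d_{r−1,s+1}; and (ii) d_{r,s} = (1−|q|²) / ((1−|q|^{2(r+s+1)}) · binom(r+s,s)_{|q|²}). -/

import Mathlib

open scoped ComplexConjugate

noncomputable section

/-- The Hilbert space `H = ℓ²(ℕ × ℤ × ℤ)` over `ℂ`. -/
abbrev H : Type := lp (fun _ : ℕ × ℤ × ℤ => ℂ) 2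

/-- The standard orthonormal basis vectors of `H`. -/
noncomputable def e (i : ℕ × ℤ × ℤ) : H := lp.single 2 i 1

/-- The Haar state `h(x) = (1-|q|²) Σ_{n≥0} |q|^{2n} ⟨e_{n,0,0}, x e_{n,0,0}⟩`. -/
noncomputable def haar (q : ℂ) (x : H →L[ℂ] H) : ℂ :=
  (1 - (‖q‖ : ℂ) ^ 2) *
    ∑' n : ℕ, ((‖q‖ : ℂ) ^ (2 * n)) *
      inner (𝕜 := ℂ) (e (n, 0, 0)) (x (e (n, 0, 0)))

/-- The q-Pochhammer symbol `(α; t)_n = Π_{r=0}^{n-1} (1 - α tʳ)`. -/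
noncomputable def qPoch (α t : ℂ) (n : ℕ) : ℂ := ∏ r ∈ Finset.range n, (1 - α * t ^ r)

/-- The Gaussian binomial coefficient `binom(n,m)_t = (t;t)_n / ((t;t)_m (t;t)_{n-m})`. -/
noncomputable def qBinom (t : ℂ) (n m : ℕ) : ℂ :=
  qPoch t t n / (qPoch t t m * qPoch t t (n - m))

namespace Stmt5Aux

lemma inner_e_self (i : ℕ × ℤ × ℤ) : (inner (𝕜 := ℂ) (e i) (e i) : ℂ) = 1 := by
  rw [e, lp.inner_single_left, lp.single_apply_self]
  simp

lemma Bpow {q : ℂ} {B : H →L[ℂ] H}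
    (hB : ∀ (n : ℕ) (r s : ℤ), B (e (n, r, s)) = (q ^ n) • e (n, r + 1, s)) :
    ∀ (s : ℕ) (n : ℕ) (r' s' : ℤ),
      (B ^ s) (e (n, r', s')) = (q ^ (n * s)) • e (n, r' + (s : ℤ), s') := by
  intro s
  induction s with
  | zero => intro n r' s'; simp
  | succ s ih =>
    intro n r' s'
    rw [pow_succ, ContinuousLinearMap.mul_apply, hB, map_smul, ih, smul_smul, ← pow_add]
    have h1 : n + n * s = n * (s + 1) := by ring
    have h2 : r' + 1 + (s : ℤ) = r' + ((s + 1 : ℕ) : ℤ) := by push_cast; ring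
    rw [h1, h2]

lemma Apow {q : ℂ} {A : H →L[ℂ] H}
    (hA : ∀ (n : ℕ) (r s : ℤ), A (e (n, r, s)) =
      ((Real.sqrt (1 - ‖q‖ ^ (2 * (n + 1))) : ℝ) : ℂ) • e (n + 1, r, s)) :
    ∀ (r : ℕ) (n : ℕ) (r' s' : ℤ),
      (A ^ r) (e (n, r', s')) =
        (∏ j ∈ Finset.range r,
          ((Real.sqrt (1 - ‖q‖ ^ (2 * (n + j + 1))) : ℝ) : ℂ)) • e (n + r, r', s') := by
  intro r
  induction r with
  | zero => intro n r' s'; simp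
  | succ r ih =>
    intro n r' s'
    rw [pow_succ, ContinuousLinearMap.mul_apply, hA, map_smul, ih, smul_smul,
      Finset.prod_range_succ']
    have h2 : n + 1 + r = n + (r + 1) := by omega
    have h3 : ∀ j : ℕ, n + 1 + j + 1 = n + (j + 1) + 1 := fun j => by omega
    simp only [h2, h3, Nat.add_zero]
    congr 1
    ring

lemma inner_val {q : ℂ} (hq1 : ‖q‖ < 1) {A B : H →L[ℂ] H}
    (hA : ∀ (n : ℕ) (r s : ℤ), A (e (n, r, s)) =
      ((Real.sqrt (1 - ‖q‖ ^ (2 * (n + 1))) : ℝ) : ℂ) • e (n + 1, r, s))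
    (hB : ∀ (n : ℕ) (r s : ℤ), B (e (n, r, s)) = (q ^ n) • e (n, r + 1, s))
    (r s n : ℕ) :
    inner (𝕜 := ℂ) (e (n, 0, 0)) (((star B) ^ s * (star A) ^ r * A ^ r * B ^ s) (e (n, 0, 0)))
    = ((‖q‖ : ℂ) ^ 2) ^ (n * s) *
        ∏ j ∈ Finset.range r, (1 - ((‖q‖ : ℂ) ^ 2) ^ (n + j + 1)) := by
  set C : ℂ := ∏ j ∈ Finset.range r,
      ((Real.sqrt (1 - ‖q‖ ^ (2 * (n + j + 1))) : ℝ) : ℂ) with hCdef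
  set a : ℂ := q ^ (n * s) with hadef
  have hop : (star B) ^ s * (star A) ^ r * A ^ r * B ^ s
      = star (A ^ r * B ^ s) * (A ^ r * B ^ s) := by
    rw [star_mul, star_pow, star_pow, mul_assoc]
  have hT : (A ^ r * B ^ s) (e (n, 0, 0)) = (a * C) • e (n + r, 0 + (s : ℤ), 0) := by
    rw [ContinuousLinearMap.mul_apply, Bpow hB, map_smul, Apow hA, smul_smul]
  rw [hop, ContinuousLinearMap.mul_apply, ContinuousLinearMap.star_eq_adjoint,
    ContinuousLinearMap.adjoint_inner_right, hT, inner_smul_left, inner_smul_right,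
    inner_e_self, mul_one, map_mul]
  have hC : (starRingEnd ℂ) C = C := by
    rw [hCdef, map_prod]
    exact Finset.prod_congr rfl fun j _ => Complex.conj_ofReal _
  rw [hC]
  have step : (starRingEnd ℂ) a * C * (a * C) = ((starRingEnd ℂ) a * a) * (C * C) := by ring
  rw [step]
  have hq : (starRingEnd ℂ) a * a = ((‖q‖ : ℂ) ^ 2) ^ (n * s) := by
    rw [hadef, mul_comm, Complex.mul_conj, Complex.normSq_eq_norm_sq, norm_pow]
    push_cast
    ring
  have hCC : C * C = ∏ j ∈ Finset.range r, (1 - ((‖q‖ : ℂ) ^ 2) ^ (n + j + 1)) := by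
    rw [hCdef, ← Finset.prod_mul_distrib]
    refine Finset.prod_congr rfl fun j _ => ?_
    rw [← Complex.ofReal_mul, Real.mul_self_sqrt
      (sub_nonneg.mpr (pow_le_one₀ (norm_nonneg q) hq1.le))]
    push_cast
    rw [← pow_mul]
  rw [hq, hCC]

/-- the summand -/
noncomputable def f (t : ℂ) (r s n : ℕ) : ℂ :=
  t ^ (n * (s + 1)) * ∏ j ∈ Finset.range r, (1 - t ^ (n + j + 1))

lemma summable_f {t : ℂ} (ht : ‖t‖ < 1) (r s : ℕ) : Summable (f t r s) := by
  refine Summable.of_norm_bounded (g := fun n => 2 ^ r * ‖t‖ ^ n)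
    ((summable_geometric_of_lt_one (norm_nonneg t) ht).mul_left _) (fun n => ?_)
  rw [f, norm_mul, norm_pow]
  have h1 : ‖t‖ ^ (n * (s + 1)) ≤ ‖t‖ ^ n :=
    pow_le_pow_of_le_one (norm_nonneg t) ht.le (Nat.le_mul_of_pos_right n (Nat.succ_pos s))
  have h2 : ‖∏ j ∈ Finset.range r, (1 - t ^ (n + j + 1))‖ ≤ 2 ^ r := by
    calc ‖∏ j ∈ Finset.range r, (1 - t ^ (n + j + 1))‖
        = ∏ j ∈ Finset.range r, ‖(1 - t ^ (n + j + 1))‖ := norm_prod _ _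
      _ ≤ ∏ j ∈ Finset.range r, 2 := by
          refine Finset.prod_le_prod (fun j _ => norm_nonneg _) (fun j _ => ?_)
          calc ‖(1 : ℂ) - t ^ (n + j + 1)‖ ≤ ‖(1 : ℂ)‖ + ‖t ^ (n + j + 1)‖ := norm_sub_le _ _
            _ ≤ 1 + 1 := by
                rw [norm_one, norm_pow]
                exact add_le_add_right (pow_le_one₀ (norm_nonneg t) ht.le) 1
            _ = 2 := by norm_num
      _ = 2 ^ r := by rw [Finset.prod_const, Finset.card_range]
  calc ‖t‖ ^ (n * (s + 1)) * ‖∏ j ∈ Finset.range r, (1 - t ^ (n + j + 1))‖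
      ≤ ‖t‖ ^ n * 2 ^ r :=
        mul_le_mul h1 h2 (norm_nonneg _) (pow_nonneg (norm_nonneg t) n)
    _ = 2 ^ r * ‖t‖ ^ n := by ring

noncomputable def S (t : ℂ) (r s : ℕ) : ℂ := ∑' n : ℕ, f t r s n

lemma S_rec {t : ℂ} (ht : ‖t‖ < 1) (r s : ℕ) :
    S t (r + 1) s = S t r s - t ^ (r + 1) * S t r (s + 1) := by
  have hterm : ∀ n : ℕ, f t (r + 1) s n = f t r s n - t ^ (r + 1) * f t r (s + 1) n := by
    intro n
    simp only [f, Finset.prod_range_succ]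
    ring
  rw [S, tsum_congr hterm, Summable.tsum_sub (summable_f ht r s)
    (((summable_f ht r (s + 1)).mul_left _)), S, S, tsum_mul_left]

lemma S_zero {t : ℂ} (ht : ‖t‖ < 1) (s : ℕ) : S t 0 s = (1 - t ^ (s + 1))⁻¹ := by
  have hterm : ∀ n : ℕ, f t 0 s n = (t ^ (s + 1)) ^ n := by
    intro n
    simp only [f, Finset.prod_range_zero, mul_one]
    rw [mul_comm n (s + 1), pow_mul]
  rw [S, tsum_congr hterm, tsum_geometric_of_norm_lt_one]
  rw [norm_pow]
  exact pow_lt_one₀ (norm_nonneg t) ht s.succ_ne_zero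

lemma factor_ne {t : ℂ} (ht : ‖t‖ < 1) (k : ℕ) : 1 - t ^ (k + 1) ≠ 0 := by
  intro h
  have h1 : t ^ (k + 1) = 1 := by linear_combination -h
  have : ‖t ^ (k + 1)‖ < 1 := by
    rw [norm_pow]; exact pow_lt_one₀ (norm_nonneg t) ht k.succ_ne_zero
  rw [h1, norm_one] at this
  exact lt_irrefl 1 this

lemma qPoch_succ (t : ℂ) (n : ℕ) : qPoch t t (n + 1) = qPoch t t n * (1 - t ^ (n + 1)) := by
  rw [qPoch, Finset.prod_range_succ, ← qPoch, ← pow_succ']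

lemma qPoch_ne {t : ℂ} (ht : ‖t‖ < 1) (n : ℕ) : qPoch t t n ≠ 0 := by
  rw [qPoch]
  refine Finset.prod_ne_zero_iff.mpr (fun j _ => ?_)
  rw [← pow_succ']
  exact factor_ne ht j

lemma S_closed {t : ℂ} (ht : ‖t‖ < 1) :
    ∀ r s : ℕ, S t r s = qPoch t t r * qPoch t t s / qPoch t t (r + s + 1) := by
  intro r
  induction r with
  | zero =>
    intro s
    rw [S_zero ht, qPoch, Finset.prod_range_zero, zero_add, qPoch_succ, one_mul]
    rw [eq_div_iff (mul_ne_zero (qPoch_ne ht s) (factor_ne ht s))]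
    field_simp [factor_ne ht s]
  | succ r ih =>
    intro s
    rw [S_rec ht, ih s, ih (s + 1), qPoch_succ t r]
    have e1 : r + 1 + s + 1 = r + (s + 1) + 1 := by omega
    rw [e1, qPoch_succ t (r + (s + 1)), qPoch_succ t s]
    have e2 : r + (s + 1) = r + s + 1 := by omega
    rw [e2, qPoch_succ t (r + s)]
    have h1 := qPoch_ne ht r
    have h2 := qPoch_ne ht s
    have h3 := qPoch_ne ht (r + s)
    have h4 := factor_ne ht (r + s)
    have h5 := factor_ne ht (r + s + 1)
    field_simp
    ring

end Stmt5Aux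

/-- the recursion and closed formula for `d_{r,s} = h((B*)ˢ(A*)ʳAʳBˢ)`. -/
theorem stmt5 (q : ℂ) (hq0 : 0 < ‖q‖) (hq1 : ‖q‖ < 1)
    (A B D : H →L[ℂ] H)
    (hA : ∀ (n : ℕ) (r s : ℤ), A (e (n, r, s)) =
      ((Real.sqrt (1 - ‖q‖ ^ (2 * (n + 1))) : ℝ) : ℂ) • e (n + 1, r, s))
    (hB : ∀ (n : ℕ) (r s : ℤ), B (e (n, r, s)) = (q ^ n) • e (n, r + 1, s))
    (hD : ∀ (n : ℕ) (r s : ℤ), D (e (n, r, s)) =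
      ((conj q / (‖q‖ : ℂ)) ^ (2 * r)) • e (n, r, s + 1))
    (d : ℕ → ℕ → ℂ)
    (hd : ∀ r s : ℕ, d r s = haar q ((star B) ^ s * (star A) ^ r * A ^ r * B ^ s)) :
    (∀ r s : ℕ, 1 ≤ r →
      d r s = d (r - 1) s - (‖q‖ : ℂ) ^ (2 * r) * d (r - 1) (s + 1)) ∧
    (∀ r s : ℕ,
      d r s = (1 - (‖q‖ : ℂ) ^ 2) /
        ((1 - (‖q‖ : ℂ) ^ (2 * (r + s + 1))) *
          qBinom ((‖q‖ : ℂ) ^ 2) (r + s) s)) := by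
  set t : ℂ := (‖q‖ : ℂ) ^ 2 with htdef
  have ht : ‖t‖ < 1 := by
    rw [htdef, norm_pow, Complex.norm_real, Real.norm_eq_abs, abs_of_nonneg (norm_nonneg q)]
    exact pow_lt_one₀ (norm_nonneg q) hq1 two_ne_zero
  have hds : ∀ r s : ℕ, d r s = (1 - t) * Stmt5Aux.S t r s := by
    intro r s
    rw [hd r s, haar, Stmt5Aux.S]
    congr 1
    refine tsum_congr fun n => ?_
    rw [Stmt5Aux.inner_val hq1 hA hB r s n, Stmt5Aux.f]
    rw [show (‖q‖ : ℂ) ^ (2 * n) = t ^ n from by rw [htdef, ← pow_mul]]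
    rw [← mul_assoc, ← pow_add]
    congr 2
    ring
  have hpow : ∀ k : ℕ, (‖q‖ : ℂ) ^ (2 * k) = t ^ k := by
    intro k; rw [htdef, ← pow_mul]
  constructor
  · intro r s hr
    obtain ⟨r', rfl⟩ : ∃ r', r = r' + 1 := ⟨r - 1, by omega⟩
    have hsub : r' + 1 - 1 = r' := rfl
    rw [hsub, hds, hds, hds, Stmt5Aux.S_rec ht, hpow]
    ring
  · intro r s
    rw [hds, Stmt5Aux.S_closed ht r s, hpow, qBinom, Nat.add_sub_cancel,
      Stmt5Aux.qPoch_succ t (r + s)]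
    have h1 := Stmt5Aux.qPoch_ne ht r
    have h2 := Stmt5Aux.qPoch_ne ht s
    have h3 := Stmt5Aux.qPoch_ne ht (r + s)
    have h4 := Stmt5Aux.factor_ne ht (r + s)
    have ht1 : (1 : ℂ) - t ≠ 0 := by
      intro h
      have : t = 1 := by linear_combination -h
      rw [this, norm_one] at ht
      exact lt_irrefl 1 ht
    field_simp
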